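/- arXiv:1605.04896 — 8 statements merged into one kernel-verified Lean document; each statement's English description precedes it below -/
import Mathlib

section
/- Let 𝒜 be an A-valued function algebra on X and ℳ a maximal ideal of 𝒜. If ℳ(x₀) ≠ A for some x₀ ∈ X, then ℳ(x₀) = {f(x₀) : f ∈ ℳ} is a maximal ideal of A. -/
variable {X : Type*} [TopologicalSpace X] [CompactSpace X] [T2Space X]
variable {A : Type*} [NormedCommRing A] [NormedAlgebra ℂ A] [CompleteSpace A] [Nontrivial A]

/-- Evaluation at a point, as a ring homomorphism on an `A`-valued function algebra
`𝒜 ⊆ C(X, A)`. -/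
def evalHom (𝒜 : Subalgebra ℂ C(X, A)) (x : X) : ↥𝒜 →+* A where
  toFun f := (f : C(X, A)) x
  map_one' := rfl
  map_mul' _ _ := rfl
  map_zero' := rfl
  map_add' _ _ := rfl

/-- If ℳ is a maximal ideal of 𝒜 with ℳ(x₀) ≠ A, then ℳ(x₀) is a maximal ideal of A. -/
theorem stmt1 (𝒜 : Subalgebra ℂ C(X, A))
    (hconst : ∀ a : A, ContinuousMap.const X a ∈ 𝒜)
    (hsep : ∀ x y : X, x ≠ y → ∀ M : Ideal A, M.IsMaximal → ∃ f ∈ 𝒜, f x - f y ∉ M)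
    (ℳ : Ideal ↥𝒜) (hℳ : ℳ.IsMaximal) (x₀ : X)
    (h : {a : A | ∃ f ∈ ℳ, (f : C(X, A)) x₀ = a} ≠ Set.univ) :
    ∃ M : Ideal A, M.IsMaximal ∧ (M : Set A) = {a : A | ∃ f ∈ ℳ, (f : C(X, A)) x₀ = a} := by
  set φ := evalHom 𝒜 x₀ with hφ
  have hsurj : Function.Surjective φ := fun a => ⟨⟨ContinuousMap.const X a, hconst a⟩, rfl⟩
  have hS : ((Ideal.map φ ℳ : Ideal A) : Set A) = {a : A | ∃ f ∈ ℳ, (f : C(X, A)) x₀ = a} := by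
    ext a
    simp only [SetLike.mem_coe, Ideal.mem_map_iff_of_surjective φ hsurj, Set.mem_setOf_eq]
    rfl
  have hne : Ideal.map φ ℳ ≠ ⊤ := by
    intro ht
    apply h
    rw [← hS, ht]
    simp
  obtain ⟨M, hM, hle⟩ := Ideal.exists_le_maximal _ hne
  refine ⟨M, hM, ?_⟩
  have hc : ℳ ≤ Ideal.comap φ M := Ideal.map_le_iff_le_comap.mp hle
  have hcne : Ideal.comap φ M ≠ ⊤ := by
    intro ht
    have : (1 : A) ∈ M := by
      have : (1 : ↥𝒜) ∈ Ideal.comap φ M := by rw [ht]; trivial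
      simpa using this
    exact hM.ne_top ((Ideal.eq_top_iff_one M).mpr this)
  have heq : ℳ = Ideal.comap φ M := hℳ.eq_of_le hcne hc
  have : Ideal.map φ ℳ = M := by
    rw [heq, Ideal.map_comap_of_surjective φ hsurj]
  rw [← this, hS]
end

section
/- Let 𝒜 be an A-valued function algebra on X and ℳ a maximal ideal of 𝒜 with ℳ(x₀) ≠ A for some x₀ ∈ X. Then for every x ∈ X with x ≠ x₀, one has ℳ(x) = A. -/
/-!
Since `ℳ(x₀)` is proper and `ℳ` is maximal, `ℳ` is the preimage of `ℳ(x₀)` under evaluation at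
`x₀`, so it contains every function vanishing at `x₀`. If `ℳ(x)` were proper, it would lie in a
maximal ideal `N` of `A`; a function `f` separating `x` from `x₀` modulo `N` gives `f - f(x₀) ∈ ℳ`,
whose value `f(x) - f(x₀)` at `x` is outside `N`.
-/

variable {X : Type*} [TopologicalSpace X] [CompactSpace X] [T2Space X]
variable {A : Type*} [NormedCommRing A] [NormedAlgebra ℂ A] [CompleteSpace A] [Nontrivial A]

theorem Ideal.IsMaximal.ker_le_of_map_ne_top {R S : Type*} [CommRing R] [CommRing S]
    {φ : R →+* S} {I : Ideal R} (hI : I.IsMaximal) (h : I.map φ ≠ ⊤) : RingHom.ker φ ≤ I := by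
  have hcomap : I = (I.map φ).comap φ :=
    hI.eq_of_le (Ideal.comap_ne_top φ h) Ideal.le_comap_map
  rw [hcomap, RingHom.ker_eq_comap_bot]
  exact Ideal.comap_mono bot_le

section FunctionAlgebra

variable {X : Type*} [TopologicalSpace X] {A : Type*} [NormedCommRing A] [NormedAlgebra ℂ A]
  {𝒜 : Subalgebra ℂ C(X, A)}

theorem evalHom_surjective (hconst : ∀ a : A, ContinuousMap.const X a ∈ 𝒜) (x : X) :
    Function.Surjective (evalHom 𝒜 x) := fun a =>
  ⟨⟨ContinuousMap.const X a, hconst a⟩, rfl⟩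

theorem setOf_eval_eq_map_evalHom (hconst : ∀ a : A, ContinuousMap.const X a ∈ 𝒜)
    (ℳ : Ideal ↥𝒜) (x : X) :
    {a : A | ∃ f ∈ ℳ, (f : C(X, A)) x = a} = ↑(ℳ.map (evalHom 𝒜 x)) := by
  ext a
  rw [SetLike.mem_coe, Ideal.mem_map_iff_of_surjective _ (evalHom_surjective hconst x)]
  rfl

theorem map_evalHom_eq_top_of_ker_le (hconst : ∀ a : A, ContinuousMap.const X a ∈ 𝒜)
    (hsep : ∀ x y : X, x ≠ y → ∀ M : Ideal A, M.IsMaximal → ∃ f ∈ 𝒜, f x - f y ∉ M)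
    {ℳ : Ideal ↥𝒜} {x₀ : X} (hker : RingHom.ker (evalHom 𝒜 x₀) ≤ ℳ) {x : X} (hx : x ≠ x₀) :
    ℳ.map (evalHom 𝒜 x) = ⊤ := by
  by_contra hne
  obtain ⟨N, hN, hle⟩ := Ideal.exists_le_maximal _ hne
  obtain ⟨f, hf𝒜, hfN⟩ := hsep x x₀ hx N hN
  let g : ↥𝒜 := ⟨f - ContinuousMap.const X (f x₀), sub_mem hf𝒜 (hconst _)⟩
  have hgℳ : g ∈ ℳ := hker (sub_self (f x₀))
  exact hfN (hle (Ideal.mem_map_of_mem (evalHom 𝒜 x) hgℳ))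

end FunctionAlgebra

/-- If ℳ is a maximal ideal of 𝒜 with ℳ(x₀) ≠ A, then ℳ(x) = A for every x ≠ x₀. -/
theorem stmt2 (𝒜 : Subalgebra ℂ C(X, A))
    (hconst : ∀ a : A, ContinuousMap.const X a ∈ 𝒜)
    (hsep : ∀ x y : X, x ≠ y → ∀ M : Ideal A, M.IsMaximal → ∃ f ∈ 𝒜, f x - f y ∉ M)
    (ℳ : Ideal ↥𝒜) (hℳ : ℳ.IsMaximal) (x₀ : X)
    (h : {a : A | ∃ f ∈ ℳ, (f : C(X, A)) x₀ = a} ≠ Set.univ) :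
    ∀ x : X, x ≠ x₀ → {a : A | ∃ f ∈ ℳ, (f : C(X, A)) x = a} = Set.univ := by
  intro x hx
  have hmap₀ : ℳ.map (evalHom 𝒜 x₀) ≠ ⊤ := by
    rwa [setOf_eval_eq_map_evalHom hconst, Ne, Submodule.coe_eq_univ] at h
  have hker := hℳ.ker_le_of_map_ne_top hmap₀
  rw [setOf_eval_eq_map_evalHom hconst, map_evalHom_eq_top_of_ker_le hconst hsep hker hx,
    Submodule.top_coe]
end

section
/- Let 𝒜 be an A-valued function algebra on X and ℳ a maximal ideal of 𝒜 with ℳ(x₀) ≠ A for some x₀ ∈ X. Then ℳ = {f ∈ 𝒜 : f(x₀) ∈ M}, where M = ℳ(x₀). -/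
variable {X : Type*} [TopologicalSpace X] [CompactSpace X] [T2Space X]
variable {A : Type*} [NormedCommRing A] [NormedAlgebra ℂ A] [CompleteSpace A] [Nontrivial A]

/-- If ℳ is a maximal ideal of 𝒜 with ℳ(x₀) ≠ A, then ℳ = {f ∈ 𝒜 : f(x₀) ∈ M}
where M = ℳ(x₀). -/
theorem stmt3 (𝒜 : Subalgebra ℂ C(X, A))
    (hconst : ∀ a : A, ContinuousMap.const X a ∈ 𝒜)
    (hsep : ∀ x y : X, x ≠ y → ∀ M : Ideal A, M.IsMaximal → ∃ f ∈ 𝒜, f x - f y ∉ M)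
    (ℳ : Ideal ↥𝒜) (hℳ : ℳ.IsMaximal) (x₀ : X)
    (h : {a : A | ∃ f ∈ ℳ, (f : C(X, A)) x₀ = a} ≠ Set.univ) :
    ∀ f : ↥𝒜, f ∈ ℳ ↔ (f : C(X, A)) x₀ ∈ {a : A | ∃ g ∈ ℳ, (g : C(X, A)) x₀ = a} := by
  set φ := evalHom 𝒜 x₀ with hφ
  have hsurj : Function.Surjective φ := fun a =>
    ⟨⟨ContinuousMap.const X a, hconst a⟩, rfl⟩
  have hmem : ∀ a : A, a ∈ Ideal.map φ ℳ ↔ ∃ g ∈ ℳ, (g : C(X, A)) x₀ = a := by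
    intro a
    rw [Ideal.mem_map_iff_of_surjective φ hsurj]
    rfl
  have hJ : Ideal.comap φ (Ideal.map φ ℳ) = ℳ := by
    refine (hℳ.eq_of_le ?_ Ideal.le_comap_map).symm
    intro htop
    apply h
    have h1 : (1 : A) ∈ Ideal.map φ ℳ := by
      have : (1 : ↥𝒜) ∈ Ideal.comap φ (Ideal.map φ ℳ) := htop ▸ trivial
      simpa using this
    have : Ideal.map φ ℳ = ⊤ := (Ideal.eq_top_iff_one _).2 h1
    ext a
    simp only [Set.mem_univ, iff_true]
    exact (hmem a).1 (this ▸ trivial)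
  intro f
  constructor
  · intro hf
    exact ⟨f, hf, rfl⟩
  · intro hf
    have : φ f ∈ Ideal.map φ ℳ := (hmem _).2 hf
    rw [← hJ]
    exact this
end

section
/- A Banach A-valued function algebra 𝒜 on a compact Hausdorff space X is natural if and only if for every finite set {f₁,…,fₙ} ⊆ 𝒜 with ⋂ⱼ Z_s(fⱼ) = ∅ (where Z_s(f) = {x ∈ X : f(x) is not invertible in A}), there exist g₁,…,gₙ ∈ 𝒜 with f₁g₁ + ⋯ + fₙgₙ = 1. -/
/-! If `𝒜` is natural, an ideal whose elements have no common singular point lies in no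
maximal ideal `{f | f x₀ ∈ M}`, so it is all of `𝒜`; for the ideal generated by `f₁, …, fₙ`
this is the Bézout identity. Conversely, under the Bézout condition, compactness of `X` and
openness of `Inv(A)` give the elements of a proper ideal a common singular point `x₀`. A maximal
ideal `ℳ` then maps to a proper, hence maximal, ideal `M` of `A` under evaluation at `x₀`, which
is onto because `𝒜` contains the constants, and `ℳ` is the preimage of `M`. -/

theorem Ideal.exists_isMaximal_forall_mem_iff_of_surjective {R S F : Type*} [CommRing R]
    [CommRing S] [FunLike F S R] [RingHomClass F S R] {ψ : F} (hψ : Function.Surjective ψ)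
    {ℳ : Ideal S} (hℳ : ℳ.IsMaximal)
    (hsing : ∀ f ∈ ℳ, ¬IsUnit (ψ f)) : ∃ M : Ideal R, M.IsMaximal ∧ ∀ f, f ∈ ℳ ↔ ψ f ∈ M := by
  have hne : ℳ.map ψ ≠ ⊤ := by
    rw [Ne, Ideal.eq_top_iff_one, Ideal.mem_map_iff_of_surjective ψ hψ]
    rintro ⟨f, hf, hf1⟩
    exact hsing f hf (hf1 ▸ isUnit_one)
  have hcomap : (ℳ.map ψ).comap ψ = ℳ :=
    (hℳ.eq_of_le (Ideal.comap_ne_top ψ hne) Ideal.le_comap_map).symm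
  refine ⟨ℳ.map ψ, (Ideal.map_eq_top_or_isMaximal_of_surjective ψ hψ hℳ).resolve_left hne,
    fun f => ?_⟩
  rw [← Ideal.mem_comap, hcomap]

section FunctionAlgebra

variable {Y R S : Type*} [TopologicalSpace Y]

def IsNatural [CommRing R] [TopologicalSpace R] [CommRing S] (φ : S → C(Y, R)) : Prop :=
  ∀ ℳ : Ideal S, ℳ.IsMaximal → ∃ (y : Y) (M : Ideal R), M.IsMaximal ∧ ∀ f : S, f ∈ ℳ ↔ φ f y ∈ M

theorem IsNatural.eq_top_of_forall_exists_isUnit [CommRing R] [TopologicalSpace R] [CommRing S]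
    {φ : S → C(Y, R)} (hφ : IsNatural φ) {I : Ideal S} (hI : ∀ y, ∃ f ∈ I, IsUnit (φ f y)) :
    I = ⊤ := by
  by_contra hne
  obtain ⟨ℳ, hℳ, hIℳ⟩ := I.exists_le_maximal hne
  obtain ⟨y, M, hM, hmem⟩ := hφ ℳ hℳ
  obtain ⟨f, hfI, hunit⟩ := hI y
  exact hM.ne_top (M.eq_top_of_isUnit_mem ((hmem f).1 (hIℳ hfI)) hunit)

theorem IsNatural.exists_sum_mul_eq_one [CommRing R] [TopologicalSpace R] [CommRing S]
    {φ : S → C(Y, R)} (hφ : IsNatural φ) {n : ℕ} (f : Fin n → S)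
    (hf : ∀ y, ∃ j, IsUnit (φ (f j) y)) : ∃ g : Fin n → S, ∑ j, f j * g j = 1 := by
  have hspan : Ideal.span (Set.range f) = ⊤ := hφ.eq_top_of_forall_exists_isUnit fun y =>
    let ⟨j, hj⟩ := hf y; ⟨f j, Ideal.subset_span ⟨j, rfl⟩, hj⟩
  obtain ⟨g, hg⟩ := Submodule.mem_span_range_iff_exists_fun S |>.1
    (Ideal.eq_top_iff_one _ |>.1 hspan)
  exact ⟨g, by simpa only [smul_eq_mul, mul_comm] using hg⟩

theorem exists_fin_mem_forall_exists_isUnit [CompactSpace Y] [NormedCommRing R]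
    [HasSummableGeomSeries R] [CommRing S] (φ : S → C(Y, R)) {I : Ideal S}
    (hI : ∀ y, ∃ f ∈ I, IsUnit (φ f y)) :
    ∃ (n : ℕ) (f : Fin n → S), (∀ j, f j ∈ I) ∧ ∀ y, ∃ j, IsUnit (φ (f j) y) := by
  choose g hgI hgunit using hI
  obtain ⟨t, ht⟩ := CompactSpace.elim_nhds_subcover (fun y => {z | IsUnit (φ (g y) z)})
    fun y => (Units.isOpen.preimage (φ (g y)).continuous).mem_nhds (hgunit y)
  refine ⟨t.card, fun j => g (t.equivFin.symm j), fun j => hgI _, fun z => ?_⟩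
  have hz : z ∈ ⋃ y ∈ t, {z | IsUnit (φ (g y) z)} := ht ▸ trivial
  obtain ⟨y, hyt, hyz⟩ := Set.mem_iUnion₂.1 hz
  exact ⟨t.equivFin ⟨y, hyt⟩, by simpa using hyz⟩

theorem exists_forall_not_isUnit_of_ne_top [CompactSpace Y] [NormedCommRing R]
    [HasSummableGeomSeries R] [CommRing S] (φ : S → C(Y, R))
    (hφ : ∀ (n : ℕ) (f : Fin n → S), (∀ y, ∃ j, IsUnit (φ (f j) y)) →
      ∃ g : Fin n → S, ∑ j, f j * g j = 1)
    {I : Ideal S} (hI : I ≠ ⊤) : ∃ y, ∀ f ∈ I, ¬IsUnit (φ f y) := by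
  by_contra! hcover
  obtain ⟨n, f, hfI, hf⟩ := exists_fin_mem_forall_exists_isUnit φ hcover
  obtain ⟨g, hg⟩ := hφ n f hf
  exact hI <| I.eq_top_iff_one.2 <| hg ▸ I.sum_mem fun j _ => I.mul_mem_right _ (hfI j)

end FunctionAlgebra

open WeakDual

variable {X : Type*} [TopologicalSpace X] [CompactSpace X] [T2Space X] [Nonempty X]
variable {A : Type*} [NormedCommRing A] [NormedAlgebra ℂ A] [CompleteSpace A] [Nontrivial A]
variable {B : Type*} [NormedCommRing B] [NormedAlgebra ℂ B] [CompleteSpace B]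

theorem stmt6_general
(ι : B →ₐ[ℂ] C(X, A))
    (κ : A →ₐ[ℂ] B) (hκ : ∀ a : A, ι (κ a) = ContinuousMap.const X a) :
    (∀ ℳ : Ideal B, ℳ.IsMaximal → ∃ (x₀ : X) (M : Ideal A), M.IsMaximal ∧
        ∀ f : B, f ∈ ℳ ↔ ι f x₀ ∈ M) ↔
      (∀ (n : ℕ) (f : Fin n → B), (∀ x : X, ∃ j, IsUnit (ι (f j) x)) →
        ∃ g : Fin n → B, ∑ j, f j * g j = 1) := by
  refine ⟨fun hnat n f => IsNatural.exists_sum_mul_eq_one (φ := ι) hnat f, fun hB ℳ hℳ => ?_⟩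
  obtain ⟨x₀, hx₀⟩ := exists_forall_not_isUnit_of_ne_top ι hB hℳ.ne_top
  have hsurj : Function.Surjective ((ContinuousMap.evalAlgHom ℂ A x₀).comp ι) :=
    fun a => ⟨κ a, by simp [hκ]⟩
  exact ⟨x₀, Ideal.exists_isMaximal_forall_mem_iff_of_surjective hsurj hℳ hx₀⟩

/-- A Banach A-valued function algebra 𝒜 is natural iff for every f₁,…,fₙ ∈ 𝒜 whose
singular sets have empty intersection there are g₁,…,gₙ ∈ 𝒜 with ∑ fⱼgⱼ = 1. -/
theorem stmt6
(ι : B →ₐ[ℂ] C(X, A)) (hinj : Function.Injective ι)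
    (κ : A →ₐ[ℂ] B) (hκ : ∀ a : A, ι (κ a) = ContinuousMap.const X a)
    (hκnorm : ∃ c₁ > (0:ℝ), ∃ c₂ > (0:ℝ), ∀ a : A, c₁ * ‖a‖ ≤ ‖κ a‖ ∧ ‖κ a‖ ≤ c₂ * ‖a‖)
    (hdom : ∀ f : B, ‖ι f‖ ≤ ‖f‖)
    (hsep : ∀ x y : X, x ≠ y → ∀ M : Ideal A, M.IsMaximal → ∃ f : B, ι f x - ι f y ∉ M) :
    (∀ ℳ : Ideal B, ℳ.IsMaximal → ∃ (x₀ : X) (M : Ideal A), M.IsMaximal ∧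
        ∀ f : B, f ∈ ℳ ↔ ι f x₀ ∈ M) ↔
      (∀ (n : ℕ) (f : Fin n → B), (∀ x : X, ∃ j, IsUnit (ι (f j) x)) →
        ∃ g : Fin n → B, ∑ j, f j * g j = 1) :=
  stmt6_general ι κ hκ
end

section
/- Let 𝒜 be a Banach A-valued function algebra on X whose uniform closure 𝒜̄ in C(X,A) is natural. If for every f ∈ 𝒜 with Z_s(f) = ∅ the pointwise inverse 1/f belongs to 𝒜, then 𝒜 itself is natural. -/
open WeakDual

set_option synthInstance.maxHeartbeats 1000000
set_option maxHeartbeats 1000000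

variable {X : Type*} [TopologicalSpace X] [CompactSpace X] [T2Space X] [Nonempty X]
variable {A : Type*} [NormedCommRing A] [NormedAlgebra ℂ A] [CompleteSpace A] [Nontrivial A]
variable {B : Type*} [NormedCommRing B] [NormedAlgebra ℂ B] [CompleteSpace B]

/-- If the uniform closure of 𝒜 in C(X,A) is natural and 1/f ∈ 𝒜 whenever f ∈ 𝒜 is
pointwise invertible, then 𝒜 is natural. -/
theorem stmt7
(ι : B →ₐ[ℂ] C(X, A)) (hinj : Function.Injective ι)
    (κ : A →ₐ[ℂ] B) (hκ : ∀ a : A, ι (κ a) = ContinuousMap.const X a)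
    (hκnorm : ∃ c₁ > (0:ℝ), ∃ c₂ > (0:ℝ), ∀ a : A, c₁ * ‖a‖ ≤ ‖κ a‖ ∧ ‖κ a‖ ≤ c₂ * ‖a‖)
    (hdom : ∀ f : B, ‖ι f‖ ≤ ‖f‖)
    (hsep : ∀ x y : X, x ≠ y → ∀ M : Ideal A, M.IsMaximal → ∃ f : B, ι f x - ι f y ∉ M)
    (hclnat : ∀ ℳ : Ideal ↥((AlgHom.range ι).topologicalClosure), ℳ.IsMaximal →
      ∃ (x₀ : X) (M : Ideal A), M.IsMaximal ∧
        ∀ f : ↥((AlgHom.range ι).topologicalClosure), f ∈ ℳ ↔ (f : C(X, A)) x₀ ∈ M)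
    (hinv : ∀ f : B, (∀ x : X, IsUnit (ι f x)) → ∃ g : B, f * g = 1) :
    ∀ ℳ : Ideal B, ℳ.IsMaximal → ∃ (x₀ : X) (M : Ideal A), M.IsMaximal ∧
      ∀ f : B, f ∈ ℳ ↔ ι f x₀ ∈ M := by
  intro ℳ hℳ
  set ℬ := (AlgHom.range ι).topologicalClosure with hℬ
  -- elements of B give elements of ℬ
  have hmemℬ : ∀ f : B, ι f ∈ ℬ := fun f =>
    (AlgHom.range ι).le_topologicalClosure ⟨f, rfl⟩
  -- the set of images of elements of ℳ, inside ℬ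
  set S : Set ℬ := {g : ℬ | ∃ m ∈ ℳ, (g : C(X, A)) = ι m} with hS
  set J : Ideal ℬ := Ideal.span S with hJ
  -- the closure (in C(X,A)) of the image of ℳ
  set C : Set C(X, A) := closure ((fun m => ι m) '' (ℳ : Set B)) with hC
  -- every element of J is in C
  have hJC : ∀ g : ℬ, g ∈ J → (g : C(X, A)) ∈ C := by
    intro g hg
    refine Submodule.span_induction ?_ ?_ ?_ ?_ hg
    · rintro x ⟨m, hm, hx⟩
      exact subset_closure ⟨m, hm, hx.symm⟩
    · exact subset_closure ⟨0, ℳ.zero_mem, by simp⟩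
    · intro x y _ _ hx hy
      have hxy : (x : C(X, A)) + (y : C(X, A)) ∈
          closure ((fun m => ι m) '' (ℳ : Set B)) := by
        refine map_mem_closure₂ continuous_add hx hy ?_
        rintro a ⟨m, hm, rfl⟩ b ⟨m', hm', rfl⟩
        exact ⟨m + m', ℳ.add_mem hm hm', by simp⟩
      simpa [hC] using hxy
    · intro a x _ hx
      have ha : (a : C(X, A)) ∈ closure ((AlgHom.range ι) : Set C(X, A)) := by
        have h2 : (a : C(X, A)) ∈ ((AlgHom.range ι).topologicalClosure :
            Set C(X, A)) := a.2
        rwa [Subalgebra.topologicalClosure_coe] at h2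
      have hax : (a : C(X, A)) * (x : C(X, A)) ∈
          closure ((fun m => ι m) '' (ℳ : Set B)) := by
        refine map_mem_closure₂ continuous_mul ha hx ?_
        rintro u ⟨b, rfl⟩ v ⟨m, hm, rfl⟩
        exact ⟨b * m, ℳ.mul_mem_left b hm, by simp⟩
      simpa [hC] using hax
  -- J is a proper ideal
  have hJne : J ≠ ⊤ := by
    intro htop
    have h1 : ((1 : ℬ) : C(X, A)) ∈ C := hJC 1 (htop ▸ Submodule.mem_top)
    rw [hC, Metric.mem_closure_iff] at h1
    obtain ⟨b, ⟨m, hm, rfl⟩, hd⟩ := h1 1 one_pos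
    have hu : ∀ x : X, IsUnit (ι m x) := by
      intro x
      have hx : ‖(1 : A) - ι m x‖ < 1 := by
        have h2 : ‖((1 : C(X, A)) - ι m) x‖ ≤ ‖(1 : C(X, A)) - ι m‖ :=
          ContinuousMap.norm_coe_le_norm _ x
        have hd' : ‖(1 : C(X, A)) - ι m‖ < 1 := by
          rwa [dist_eq_norm] at hd
        calc ‖(1 : A) - ι m x‖ = ‖((1 : C(X, A)) - ι m) x‖ := by simp
          _ ≤ _ := h2
          _ < 1 := hd'
      have := (Units.oneSub ((1 : A) - ι m x) hx).isUnit
      simpa using this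
    rcases hinv m hu with ⟨g, hg⟩
    have h1m : (1 : B) ∈ ℳ := by
      rw [← hg]; exact ℳ.mul_mem_right g hm
    exact hℳ.ne_top ((Ideal.eq_top_iff_one _).2 h1m)
  -- extend to a maximal ideal of ℬ
  rcases Ideal.exists_le_maximal J hJne with ⟨ℳ', hℳ'max, hJℳ'⟩
  rcases hclnat ℳ' hℳ'max with ⟨x₀, M, hM, hiff⟩
  refine ⟨x₀, M, hM, fun f => ⟨fun hf => ?_, fun hf => ?_⟩⟩
  · -- forward
    have : (⟨ι f, hmemℬ f⟩ : ℬ) ∈ ℳ' :=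
      hJℳ' (Ideal.subset_span ⟨f, hf, rfl⟩)
    exact (hiff _).1 this
  · -- backward
    by_contra hfℳ
    rcases hℳ.exists_inv hfℳ with ⟨g, m, hm, hgm⟩
    have hmM : ι m x₀ ∈ M := by
      have : (⟨ι m, hmemℬ m⟩ : ℬ) ∈ ℳ' :=
        hJℳ' (Ideal.subset_span ⟨m, hm, rfl⟩)
      exact (hiff _).1 this
    have h1 : (1 : A) ∈ M := by
      have heq : ι g x₀ * ι f x₀ + ι m x₀ = 1 := by
        have := congrArg (fun b => ι b x₀) hgm
        simpa using this
      rw [← heq]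
      exact M.add_mem (M.mul_mem_left _ hf) hmM
    exact hM.ne_top ((Ideal.eq_top_iff_one _).2 h1)
end

section
/- For a normed A-valued function algebra 𝒜 on X, every point x ∈ X and character φ of A determine a character ε_x ⋄ φ : 𝒜 → ℂ, f ↦ φ(f(x)), and the map 𝒥 : X × Δ(A) → Δ(𝒜), (x,φ) ↦ ε_x ⋄ φ, is continuous and injective (a homeomorphism onto its compact image), where character spaces carry the Gelfand (weak-star) topology. -/
/-!
Characters of a Banach algebra are uniformly bounded, so `(a, φ) ↦ φ a` is jointly continuous;
composing with `(x, f) ↦ ι f x` gives weak-star continuity of `(x, φ) ↦ ε_x ⋄ φ`. Constant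
functions `κ a` recover `φ` from `ε_x ⋄ φ`, and separation modulo the maximal ideal `ker φ`
recovers `x`. A continuous injection of the compact space `X × Δ(A)` into the Hausdorff space
`Δ(𝒜)` is a closed embedding.
-/

namespace WeakDual.CharacterSpace

section Evaluation

variable {𝕜 A : Type*} [NontriviallyNormedField 𝕜] [ProperSpace 𝕜]
  [NormedRing A] [NormedAlgebra 𝕜 A] [CompleteSpace A]

theorem continuous_gelfandTransform : Continuous (gelfandTransform 𝕜 A) :=
  AddMonoidHomClass.continuous_of_bound _ ‖(1 : A)‖ fun a =>
    (ContinuousMap.norm_le _ (by positivity)).2 fun φ =>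
      mul_comm ‖a‖ ‖(1 : A)‖ ▸ AlgHom.norm_apply_le_self_mul_norm_one φ a

theorem continuous_apply_prod : Continuous fun p : A × characterSpace 𝕜 A => p.2 p.1 :=
  continuous_eval.comp ((continuous_gelfandTransform.comp continuous_fst).prodMk continuous_snd)

end Evaluation

section PointCharacter

variable {𝕜 X A B : Type*} [NontriviallyNormedField 𝕜] [TopologicalSpace X]
  [NormedCommRing A] [NormedAlgebra 𝕜 A] [CompleteSpace A]
  [NormedRing B] [NormedAlgebra 𝕜 B] [CompleteSpace B]

noncomputable def pointCharacter (ι : B →ₐ[𝕜] C(X, A)) (p : X × characterSpace 𝕜 A) :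
    characterSpace 𝕜 B :=
  equivAlgHom.symm ((equivAlgHom p.2).comp ((ContinuousMap.evalAlgHom 𝕜 A p.1).comp ι))

@[simp]
theorem pointCharacter_apply (ι : B →ₐ[𝕜] C(X, A)) (x : X) (φ : characterSpace 𝕜 A) (f : B) :
    pointCharacter ι (x, φ) f = φ (ι f x) :=
  rfl

theorem continuous_pointCharacter [ProperSpace 𝕜] (ι : B →ₐ[𝕜] C(X, A)) :
    Continuous (pointCharacter ι) :=
  (continuous_of_continuous_eval fun f =>
    continuous_apply_prod.comp
      (((ι f).continuous.comp continuous_fst).prodMk continuous_snd)).subtype_mk _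

theorem pointCharacter_injective (ι : B →ₐ[𝕜] C(X, A)) (κ : A →ₐ[𝕜] B)
    (hκ : ∀ a : A, ι (κ a) = ContinuousMap.const X a)
    (hsep : ∀ x y : X, x ≠ y → ∀ M : Ideal A, M.IsMaximal → ∃ f : B, ι f x - ι f y ∉ M) :
    Function.Injective (pointCharacter ι) := by
  rintro ⟨x, φ⟩ ⟨y, ψ⟩ h
  have hval (f : B) : φ (ι f x) = ψ (ι f y) := by
    rw [← pointCharacter_apply, ← pointCharacter_apply, h]
  have hφψ : φ = ψ := by
    ext a
    simpa [hκ a] using hval (κ a)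
  subst hφψ
  obtain rfl : x = y := by
    by_contra hne
    obtain ⟨f, hf⟩ := hsep x y hne (RingHom.ker φ) inferInstance
    exact hf (by simpa [RingHom.mem_ker, sub_eq_zero] using hval f)
  rfl

end PointCharacter

end WeakDual.CharacterSpace

open WeakDual

variable {X : Type*} [TopologicalSpace X] [CompactSpace X] [T2Space X] [Nonempty X]
variable {A : Type*} [NormedCommRing A] [NormedAlgebra ℂ A] [CompleteSpace A] [Nontrivial A]
variable {B : Type*} [NormedCommRing B] [NormedAlgebra ℂ B] [CompleteSpace B]

theorem stmt8_general
(ι : B →ₐ[ℂ] C(X, A))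
    (κ : A →ₐ[ℂ] B) (hκ : ∀ a : A, ι (κ a) = ContinuousMap.const X a)
    (hsep : ∀ x y : X, x ≠ y → ∀ M : Ideal A, M.IsMaximal → ∃ f : B, ι f x - ι f y ∉ M) :
    ∃ J : X × characterSpace ℂ A → characterSpace ℂ B,
      (∀ (x : X) (φ : characterSpace ℂ A) (f : B), J (x, φ) f = φ (ι f x)) ∧
      Continuous J ∧ Function.Injective J ∧
      Topology.IsEmbedding J ∧ IsCompact (Set.range J) := by
  have hcont := CharacterSpace.continuous_pointCharacter ι
  have hinj := CharacterSpace.pointCharacter_injective ι κ hκ hsep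
  exact ⟨_, CharacterSpace.pointCharacter_apply ι, hcont, hinj,
    (hcont.isClosedEmbedding hinj).isEmbedding, isCompact_range hcont⟩

/-- The map 𝒥 : X × Δ(A) → Δ(𝒜), (x,φ) ↦ ε_x ⋄ φ, is well defined, continuous and
injective: a homeomorphism onto a compact subset of Δ(𝒜). -/
theorem stmt8
(ι : B →ₐ[ℂ] C(X, A)) (hinj : Function.Injective ι)
    (κ : A →ₐ[ℂ] B) (hκ : ∀ a : A, ι (κ a) = ContinuousMap.const X a)
    (hκnorm : ∃ c₁ > (0:ℝ), ∃ c₂ > (0:ℝ), ∀ a : A, c₁ * ‖a‖ ≤ ‖κ a‖ ∧ ‖κ a‖ ≤ c₂ * ‖a‖)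
    (hdom : ∀ f : B, ‖ι f‖ ≤ ‖f‖)
    (hsep : ∀ x y : X, x ≠ y → ∀ M : Ideal A, M.IsMaximal → ∃ f : B, ι f x - ι f y ∉ M)
(hss : Ideal.jacobson (⊥ : Ideal A) = ⊥) :
    ∃ J : X × characterSpace ℂ A → characterSpace ℂ B,
      (∀ (x : X) (φ : characterSpace ℂ A) (f : B), J (x, φ) f = φ (ι f x)) ∧
      Continuous J ∧ Function.Injective J ∧
      Topology.IsEmbedding J ∧ IsCompact (Set.range J) :=
  stmt8_general ι κ hκ hsep
end

section
/- If 𝒜 is a natural Banach A-valued function algebra on X, then the map 𝒥 : X × Δ(A) → Δ(𝒜), (x,φ) ↦ (f ↦ φ(f(x))), is a homeomorphism; i.e., Δ(𝒜) is homeomorphic to X × Δ(A). -/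
/-!
Characters are bounded by `‖1‖`, so evaluation `Δ(A) × A → ℂ` is jointly continuous and the map
`𝒥 (x, φ) = φ ∘ evₓ` is continuous; since `X × Δ(A)` is compact and `Δ(𝒜)` is Hausdorff, it remains
to see that `𝒥` is bijective. Evaluating on constants recovers `φ`, and separation of points modulo
the maximal ideal `ker φ` then recovers `x`. Conversely, naturality writes the kernel of any character
of `𝒜` as `{f | f x₀ ∈ M}`, and by Gelfand–Mazur `M` is the kernel of a character `φ` of `A`; characters
with equal kernels coincide, so that character is `𝒥 (x₀, φ)`.
-/

open WeakDual Filter Topology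

namespace WeakDual.CharacterSpace

variable {𝕜 A : Type*} [NontriviallyNormedField 𝕜] [NormedRing A] [NormedAlgebra 𝕜 A]
  [CompleteSpace A]

theorem continuous_eval_prod : Continuous fun p : characterSpace 𝕜 A × A => p.1 p.2 := by
  refine continuous_iff_continuousAt.2 fun ⟨φ₀, a₀⟩ => ?_
  have hsplit : (fun p : characterSpace 𝕜 A × A => p.1 p.2) = fun p => p.1 (p.2 - a₀) + p.1 a₀ := by
    funext p
    rw [map_sub, sub_add_cancel]
  have hsmall : Tendsto (fun p : characterSpace 𝕜 A × A => p.1 (p.2 - a₀)) (𝓝 (φ₀, a₀)) (𝓝 0) := by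
    refine squeeze_zero_norm (a := fun p => ‖(1 : A)‖ * ‖p.2 - a₀‖) (fun p => ?_) ?_
    · exact (ContinuousLinearMap.le_opNorm _ _).trans
        (mul_le_mul_of_nonneg_right (norm_le_norm_one p.1) (norm_nonneg _))
    · have hcont : Continuous fun p : characterSpace 𝕜 A × A => ‖(1 : A)‖ * ‖p.2 - a₀‖ := by
        fun_prop
      simpa using hcont.tendsto (φ₀, a₀)
  have hfixed : Continuous fun p : characterSpace 𝕜 A × A => p.1 a₀ :=
    (eval_continuous a₀).comp (continuous_subtype_val.comp continuous_fst)
  rw [ContinuousAt, hsplit]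
  simpa using hsmall.add (hfixed.tendsto (φ₀, a₀))

end WeakDual.CharacterSpace

theorem Ideal.ker_toCharacterSpace {A : Type*} [NormedCommRing A] [NormedAlgebra ℂ A]
    [CompleteSpace A] (M : Ideal A) [hM : M.IsMaximal] : RingHom.ker M.toCharacterSpace = M :=
  (hM.eq_of_le (RingHom.ker_ne_top _) fun _ ha => M.toCharacterSpace_apply_eq_zero_of_mem ha).symm

section EvalCharacter

variable {𝕜 X A B : Type*} [NontriviallyNormedField 𝕜] [TopologicalSpace X]
  [NormedCommRing A] [NormedAlgebra 𝕜 A] [NormedRing B] [NormedAlgebra 𝕜 B] [CompleteSpace B]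
  (ι : B →ₐ[𝕜] C(X, A))

/-- The map `𝒥 : X × Δ(A) → Δ(𝒜)` of the paper, for `𝒜` the algebra `B` realised by `ι`. -/
noncomputable def evalCharacter (p : X × characterSpace 𝕜 A) : characterSpace 𝕜 B :=
  CharacterSpace.equivAlgHom.symm <|
    (CharacterSpace.toAlgHom p.2).comp ((ContinuousMap.evalAlgHom 𝕜 A p.1).comp ι)

@[simp]
theorem evalCharacter_apply (p : X × characterSpace 𝕜 A) (f : B) :
    evalCharacter ι p f = p.2 (ι f p.1) :=
  rfl

theorem continuous_evalCharacter [CompleteSpace A] : Continuous (evalCharacter ι) := by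
  refine Continuous.subtype_mk (continuous_of_continuous_eval fun f => ?_) _
  exact CharacterSpace.continuous_eval_prod.comp
    (continuous_snd.prodMk ((ι f).continuous.comp continuous_fst))

theorem evalCharacter_injective (hconst : ∀ a : A, ∃ f : B, ι f = ContinuousMap.const X a)
    (hsep : ∀ x y : X, x ≠ y → ∀ M : Ideal A, M.IsMaximal → ∃ f : B, ι f x - ι f y ∉ M) :
    Function.Injective (evalCharacter ι) := by
  rintro ⟨x, φ⟩ ⟨y, ψ⟩ h
  have happ (f : B) : φ (ι f x) = ψ (ι f y) := DFunLike.congr_fun h f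
  obtain rfl : φ = ψ := CharacterSpace.ext fun a => by
    obtain ⟨f, hf⟩ := hconst a
    simpa [hf] using happ f
  obtain rfl : x = y := by
    by_contra hxy
    obtain ⟨f, hf⟩ := hsep x y hxy (RingHom.ker φ) inferInstance
    exact hf (by rw [RingHom.mem_ker, map_sub, happ f, sub_self])
  rfl

end EvalCharacter

theorem evalCharacter_surjective {X A B : Type*} [TopologicalSpace X]
    [NormedCommRing A] [NormedAlgebra ℂ A] [CompleteSpace A]
    [NormedRing B] [NormedAlgebra ℂ B] [CompleteSpace B] (ι : B →ₐ[ℂ] C(X, A))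
    (hnat : ∀ ℳ : Ideal B, ℳ.IsMaximal → ∃ (x₀ : X) (M : Ideal A), M.IsMaximal ∧
      ∀ f : B, f ∈ ℳ ↔ ι f x₀ ∈ M) :
    Function.Surjective (evalCharacter ι) := by
  intro ψ
  obtain ⟨x₀, M, hM, hmem⟩ := hnat (RingHom.ker ψ) inferInstance
  refine ⟨(x₀, M.toCharacterSpace), CharacterSpace.ext_ker (Ideal.ext fun f => ?_)⟩
  rw [hmem, RingHom.mem_ker, evalCharacter_apply, ← RingHom.mem_ker, Ideal.ker_toCharacterSpace]

variable {X : Type*} [TopologicalSpace X] [CompactSpace X] [T2Space X] [Nonempty X]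
variable {A : Type*} [NormedCommRing A] [NormedAlgebra ℂ A] [CompleteSpace A] [Nontrivial A]
variable {B : Type*} [NormedCommRing B] [NormedAlgebra ℂ B] [CompleteSpace B]

theorem stmt9_general
(ι : B →ₐ[ℂ] C(X, A))
    (κ : A →ₐ[ℂ] B) (hκ : ∀ a : A, ι (κ a) = ContinuousMap.const X a)
    (hsep : ∀ x y : X, x ≠ y → ∀ M : Ideal A, M.IsMaximal → ∃ f : B, ι f x - ι f y ∉ M)
    (hnat : ∀ ℳ : Ideal B, ℳ.IsMaximal → ∃ (x₀ : X) (M : Ideal A), M.IsMaximal ∧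
      ∀ f : B, f ∈ ℳ ↔ ι f x₀ ∈ M) :
    ∃ J : X × characterSpace ℂ A ≃ₜ characterSpace ℂ B,
      ∀ (x : X) (φ : characterSpace ℂ A) (f : B), J (x, φ) f = φ (ι f x) := by
  have hbij : Function.Bijective (evalCharacter ι) :=
    ⟨evalCharacter_injective ι (fun a => ⟨κ a, hκ a⟩) hsep, evalCharacter_surjective ι hnat⟩
  exact ⟨(continuous_evalCharacter ι).homeoOfEquivCompactToT2 (f := Equiv.ofBijective _ hbij),
    fun _ _ _ => rfl⟩

/-- If 𝒜 is a natural Banach A-valued function algebra on X, then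
Δ(𝒜) ≃ X × Δ(A) via (x,φ) ↦ (f ↦ φ(f(x))). -/
theorem stmt9
(ι : B →ₐ[ℂ] C(X, A)) (hinj : Function.Injective ι)
    (κ : A →ₐ[ℂ] B) (hκ : ∀ a : A, ι (κ a) = ContinuousMap.const X a)
    (hκnorm : ∃ c₁ > (0:ℝ), ∃ c₂ > (0:ℝ), ∀ a : A, c₁ * ‖a‖ ≤ ‖κ a‖ ∧ ‖κ a‖ ≤ c₂ * ‖a‖)
    (hdom : ∀ f : B, ‖ι f‖ ≤ ‖f‖)
    (hsep : ∀ x y : X, x ≠ y → ∀ M : Ideal A, M.IsMaximal → ∃ f : B, ι f x - ι f y ∉ M)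
(hss : Ideal.jacobson (⊥ : Ideal A) = ⊥)
    (hnat : ∀ ℳ : Ideal B, ℳ.IsMaximal → ∃ (x₀ : X) (M : Ideal A), M.IsMaximal ∧
      ∀ f : B, f ∈ ℳ ↔ ι f x₀ ∈ M) :
    ∃ J : X × characterSpace ℂ A ≃ₜ characterSpace ℂ B,
      ∀ (x : X) (φ : characterSpace ℂ A) (f : B), J (x, φ) f = φ (ι f x) :=
  stmt9_general ι κ hκ hsep hnat
end

section
/- Let 𝒜 be an admissible Banach A-valued function algebra that has property 𝒫 (every character τ of 𝒜 satisfies τ((φ∘f)·1) = τ(f), where φ = τ|_A). Then its uniform closure 𝒜̄ in C(X,A) also has property 𝒫. -/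
/-!
A character `σ` of `𝒜̄` is continuous (`𝒜̄` is a closed subalgebra of a Banach algebra), and so
is `φ = σ ∘ κ` on `A`; hence postcomposition with `P = algebraMap ℂ A ∘ φ`, i.e. `f ↦ (φ ∘ f)·𝟏`,
is a continuous self-map of `C(X, A)`. Admissibility says that it maps `𝒜` into itself, and
property `𝒫` for the character `σ|_𝒜` says that `σ` is invariant under it on `𝒜`. Both facts
pass to the closure by continuity and density.
-/

open WeakDual

variable {X : Type*} [TopologicalSpace X] [CompactSpace X] [T2Space X] [Nonempty X]
variable {A : Type*} [NormedCommRing A] [NormedAlgebra ℂ A] [CompleteSpace A] [Nontrivial A]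
variable {B : Type*} [NormedCommRing B] [NormedAlgebra ℂ B] [CompleteSpace B]

/-- The embedding of scalar-valued continuous functions into `A`-valued ones,
`g ↦ g·𝟏`. -/
noncomputable def scalHom (X A : Type*) [TopologicalSpace X] [NormedCommRing A]
    [NormedAlgebra ℂ A] : C(X, ℂ) →ₐ[ℂ] C(X, A) :=
  AlgHom.compLeftContinuous ℂ (Algebra.ofId ℂ A) (continuous_algebraMap ℂ A)

/-- The scalar subalgebra `𝔄 = 𝒜 ∩ C(X)`, realized inside `C(X, ℂ)`: those scalar
functions `g` with `g·𝟏 ∈ 𝒜`. -/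
noncomputable def scalarSub (ι : B →ₐ[ℂ] C(X, A)) : Subalgebra ℂ C(X, ℂ) :=
  Subalgebra.comap (scalHom X A) (AlgHom.range ι)

theorem Set.MapsTo.apply_closure_eq_of_apply_eq {Y Z : Type*} [TopologicalSpace Y]
    [TopologicalSpace Z] [T2Space Z] {s : Set Y} {Φ : Y → Y} (hs : MapsTo Φ s s)
    (hΦ : Continuous Φ) {F : closure s → Z} (hF : Continuous F)
    (h : ∀ y (hy : y ∈ s), F ⟨Φ y, subset_closure (hs hy)⟩ = F ⟨y, subset_closure hy⟩)
    (y : Y) (hy : y ∈ closure s) : F ⟨Φ y, hs.closure hΦ hy⟩ = F ⟨y, hy⟩ := by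
  have hdense : Dense {z : closure s | (z : Y) ∈ s} := by
    rw [Subtype.dense_iff]
    exact closure_mono fun z hz => ⟨⟨z, subset_closure hz⟩, hz, rfl⟩
  refine congrFun (Continuous.ext_on hdense (f := F ∘ (hs.closure hΦ).restrict) ?_ hF ?_) ⟨y, hy⟩
  · exact hF.comp (hΦ.restrict _)
  · rintro ⟨z, _⟩ hz
    exact h z hz

theorem stmt16_general
(ι : B →ₐ[ℂ] C(X, A)) (κ : A →ₐ[ℂ] B) (hκ : ∀ a : A, ι (κ a) = ContinuousMap.const X a)
    (hadm : ∀ (f : B) (φ : A →ₐ[ℂ] ℂ), ∃ g : B, ∀ x : X, ι g x = algebraMap ℂ A (φ (ι f x)))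
    (hP : ∀ (τ : B →ₐ[ℂ] ℂ) (f g : B),
      (∀ x : X, ι g x = algebraMap ℂ A (τ (κ (ι f x)))) → τ g = τ f) :
    ∀ (σ : ↥((AlgHom.range ι).topologicalClosure) →ₐ[ℂ] ℂ)
      (f g : ↥((AlgHom.range ι).topologicalClosure)),
      (∀ x : X, (g : C(X, A)) x = algebraMap ℂ A
        (σ ⟨ContinuousMap.const X ((f : C(X, A)) x),
          (AlgHom.range ι).le_topologicalClosure ⟨κ ((f : C(X, A)) x), hκ _⟩⟩)) →
      σ g = σ f := by
  intro σ f g hg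
  have : CompleteSpace (AlgHom.range ι).topologicalClosure :=
    (Subalgebra.isClosed_topologicalClosure _).completeSpace_coe
  let τ : B →ₐ[ℂ] ℂ :=
    σ.comp (ι.codRestrict _ fun b => (AlgHom.range ι).le_topologicalClosure ⟨b, rfl⟩)
  let φ : A →ₐ[ℂ] ℂ := τ.comp κ
  let P : C(A, A) := ⟨fun a => algebraMap ℂ A (φ a), by fun_prop⟩
  have hPT : Set.MapsTo P.comp (AlgHom.range ι : Set C(X, A)) (AlgHom.range ι) := by
    rintro _ ⟨b, rfl⟩
    obtain ⟨c, hc⟩ := hadm b φ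
    exact ⟨c, ContinuousMap.ext hc⟩
  have hσP : ∀ h (hh : h ∈ (AlgHom.range ι : Set C(X, A))),
      σ ⟨P.comp h, subset_closure (hPT hh)⟩ = σ ⟨h, subset_closure hh⟩ := by
    rintro _ ⟨b, rfl⟩
    obtain ⟨c, hc⟩ := hadm b φ
    have hcb : P.comp (ι b) = ι c := ContinuousMap.ext fun x => (hc x).symm
    exact (congrArg σ (Subtype.ext hcb)).trans (hP τ b c hc)
  have hσf := hPT.apply_closure_eq_of_apply_eq P.continuous_postcomp (map_continuous σ) hσP f f.2
  refine (congrArg σ (Subtype.ext (ContinuousMap.ext fun x => ?_))).trans hσf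
  exact (hg x).trans (congrArg (algebraMap ℂ A ∘ σ) (Subtype.ext (hκ _).symm))

/-- If 𝒜 has property 𝒫 (every character τ satisfies τ((φ∘f)·𝟏) = τ(f) where
φ = τ|_A), then its uniform closure 𝒜̄ in C(X,A) also has property 𝒫. -/
theorem stmt16
(ι : B →ₐ[ℂ] C(X, A)) (hinj : Function.Injective ι)
    (κ : A →ₐ[ℂ] B) (hκ : ∀ a : A, ι (κ a) = ContinuousMap.const X a)
    (hκnorm : ∃ c₁ > (0:ℝ), ∃ c₂ > (0:ℝ), ∀ a : A, c₁ * ‖a‖ ≤ ‖κ a‖ ∧ ‖κ a‖ ≤ c₂ * ‖a‖)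
    (hdom : ∀ f : B, ‖ι f‖ ≤ ‖f‖)
    (hsep : ∀ x y : X, x ≠ y → ∀ M : Ideal A, M.IsMaximal → ∃ f : B, ι f x - ι f y ∉ M)
    (hss : Ideal.jacobson (⊥ : Ideal A) = ⊥)
    (hadm : ∀ (f : B) (φ : A →ₐ[ℂ] ℂ), ∃ g : B, ∀ x : X, ι g x = algebraMap ℂ A (φ (ι f x)))
    (hP : ∀ (τ : B →ₐ[ℂ] ℂ) (f g : B),
      (∀ x : X, ι g x = algebraMap ℂ A (τ (κ (ι f x)))) → τ g = τ f) :
    ∀ (σ : ↥((AlgHom.range ι).topologicalClosure) →ₐ[ℂ] ℂ)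
      (f g : ↥((AlgHom.range ι).topologicalClosure)),
      (∀ x : X, (g : C(X, A)) x = algebraMap ℂ A
        (σ ⟨ContinuousMap.const X ((f : C(X, A)) x),
          (AlgHom.range ι).le_topologicalClosure ⟨κ ((f : C(X, A)) x), hκ _⟩⟩)) →
      σ g = σ f :=
  stmt16_general ι κ hκ hadm hP
end
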